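/- arXiv:2001.09814 — 2 statements merged into one kernel-verified Lean document; each statement's English description precedes it below -/
import Mathlib

section
/- Let p be an odd prime and n an integer with gcd(n,p)=1. Then τ(n,p) = (p−1)/4 + (1+(n/p))/2 if p ≡ 1 (mod 4), and τ(n,p) = (p−3)/4 + 1 if p ≡ 3 (mod 4), where (n/p) denotes the Legendre symbol. -/
/-!
Writing `δ` for the indicator of `0`, `2·[x is a square] = 1 + χ x + δ x` for the quadratic
character `χ`, so `4 τ(n,p)` is the sum over `a` of `(1 + χ a)(1 + χ (n + a))` plus the two
boundary terms `a = 0` and `a = -n`. The main sum is `p - 1`, because `∑ χ = 0` and the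
Jacobsthal-type sum `∑ χ a χ (n + a)` reduces to the Jacobi sum `J(χ, χ) = -χ(-1)`.
Hence `4 τ(n,p) = p + 1 + (n/p) + (-n/p)`, and `(-1/p)` is `1` or `-1` according to `p mod 4`.
-/

/-- `(a,b)` is a target for `n` modulus `c`: `a` and `b` are squares in `ℤ/cℤ`
(zero allowed) and `n + a = b` in `ℤ/cℤ`. -/
def IsTarget (n : ℤ) (c : ℕ) (a b : ZMod c) : Prop :=
  IsSquare a ∧ IsSquare b ∧ (n : ZMod c) + a = b

/-- `τ(n,c)`, the number of targets for `n` modulus `c`. -/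
noncomputable def tau (n : ℤ) (c : ℕ) : ℕ :=
  ({ab : ZMod c × ZMod c | IsTarget n c ab.1 ab.2}).ncard

open Finset

theorem tau_eq_ncard (n : ℤ) (c : ℕ) :
    tau n c = {a : ZMod c | IsSquare a ∧ IsSquare ((n : ZMod c) + a)}.ncard := by
  have : {ab : ZMod c × ZMod c | IsTarget n c ab.1 ab.2} =
      (fun a ↦ (a, (n : ZMod c) + a)) '' {a | IsSquare a ∧ IsSquare ((n : ZMod c) + a)} := by
    ext ⟨a, b⟩
    simp only [IsTarget, Set.mem_ofPred_eq, Set.mem_image, Prod.mk.injEq]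
    constructor
    · rintro ⟨ha, hb, rfl⟩
      exact ⟨a, ⟨ha, hb⟩, rfl, rfl⟩
    · rintro ⟨a, ⟨ha, hb⟩, rfl, rfl⟩
      exact ⟨ha, hb, rfl⟩
  rw [tau, this, Set.ncard_image_of_injective _ fun a b h ↦ (Prod.mk.inj h).1]

section FiniteField

variable {F : Type*} [Field F] [Fintype F] [DecidableEq F]

local notation "χ" => quadraticChar F

theorem two_mul_ite_isSquare (x : F) :
    2 * (if IsSquare x then 1 else 0 : ℤ) = 1 + χ x + if x = 0 then 1 else 0 := by
  by_cases hx : x = 0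
  · simp [hx]
  · by_cases hs : IsSquare x
    · simp [hx, hs, (quadraticChar_one_iff_isSquare hx).2 hs]
    · simp [hx, hs, quadraticChar_neg_one_iff_not_isSquare.2 hs]

theorem quadraticChar_sum_mul_add (hF : ringChar F ≠ 2) {n : F} (hn : n ≠ 0) :
    ∑ a, χ a * χ (n + a) = -1 := by
  have hJ : jacobiSum χ χ = -χ (-1) := by
    simpa only [(quadraticChar_isQuadratic F).inv] using
      jacobiSum_nontrivial_inv (quadraticChar_ne_one hF)
  have hsq : χ (-1) * χ (-1) = 1 := by
    rw [← sq]; exact quadraticChar_sq_one (neg_ne_zero.2 one_ne_zero)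
  calc ∑ a, χ a * χ (n + a)
      = ∑ x, χ (-n * x) * χ (n + -n * x) :=
        (Equiv.sum_comp (Equiv.mulLeft₀ (-n) (neg_ne_zero.2 hn)) fun a ↦ χ a * χ (n + a)).symm
    _ = ∑ x, χ (-1) * (χ x * χ (1 - x)) := by
        refine sum_congr rfl fun x _ ↦ ?_
        rw [show n + -n * x = n * (1 - x) by ring, map_mul, map_mul, show -n = -1 * n by ring,
          map_mul]
        linear_combination χ (-1) * χ x * χ (1 - x) * quadraticChar_sq_one hn
    _ = -1 := by rw [← mul_sum, ← jacobiSum, hJ]; linear_combination -hsq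

theorem four_mul_ite_isSquare_and_isSquare_add {n : F} (hn : n ≠ 0) (a : F) :
    4 * (if IsSquare a ∧ IsSquare (n + a) then 1 else 0 : ℤ) =
      (1 + χ a) * (1 + χ (n + a)) + (if a = 0 then 1 + χ n else 0) +
        if a = -n then 1 + χ (-n) else 0 := by
  have h4 : 4 * (if IsSquare a ∧ IsSquare (n + a) then 1 else 0 : ℤ) =
      (2 * if IsSquare a then 1 else 0) * (2 * if IsSquare (n + a) then 1 else 0) := by
    by_cases ha : IsSquare a <;> by_cases hb : IsSquare (n + a) <;> simp [ha, hb]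
  rw [h4, two_mul_ite_isSquare, two_mul_ite_isSquare]
  by_cases ha : a = 0
  · simp only [ha, add_zero, if_true, hn, if_false, zero_eq_neg]
    ring
  by_cases ha' : a = -n
  · simp only [ha', add_neg_cancel, add_zero, if_true, neg_eq_zero, hn, if_false]
    ring
  have hna : n + a ≠ 0 := fun h ↦ ha' (eq_neg_of_add_eq_zero_right h)
  simp [ha, ha', hna]

theorem four_mul_ncard_isSquare_and_isSquare_add (hF : ringChar F ≠ 2) {n : F} (hn : n ≠ 0) :
    4 * ({a : F | IsSquare a ∧ IsSquare (n + a)}.ncard : ℤ) =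
      Fintype.card F + 1 + χ n + χ (-n) := by
  classical
  have hshift : ∑ a, χ (n + a) = 0 :=
    (Equiv.sum_comp (Equiv.addLeft n) χ).trans (quadraticChar_sum_zero hF)
  have hmain : ∑ a, (1 + χ a) * (1 + χ (n + a)) = Fintype.card F - 1 := by
    calc ∑ a, (1 + χ a) * (1 + χ (n + a))
        = ∑ a, (1 + χ a + χ (n + a) + χ a * χ (n + a)) := sum_congr rfl fun a _ ↦ by ring
      _ = Fintype.card F - 1 := by
        simp only [sum_add_distrib, sum_const, card_univ, nsmul_eq_mul, mul_one,
          quadraticChar_sum_zero hF, hshift, quadraticChar_sum_mul_add hF hn]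
        ring
  rw [Set.ncard_eq_toFinset_card', Set.toFinset_ofPred, natCast_card_filter, mul_sum]
  simp only [four_mul_ite_isSquare_and_isSquare_add hn, sum_add_distrib, hmain, sum_ite_eq',
    mem_univ, if_true]
  ring

end FiniteField

theorem intCast_ne_zero_of_gcd_eq_one {p : ℕ} [Fact p.Prime] {n : ℤ} (hn : Int.gcd n p = 1) :
    (n : ZMod p) ≠ 0 := by
  intro h
  have hgcd :=
    Int.gcd_eq_right (Int.natCast_nonneg p) ((ZMod.intCast_zmod_eq_zero_iff_dvd n p).1 h)
  rw [hn] at hgcd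
  exact (Fact.out : p.Prime).one_lt.ne (by exact_mod_cast hgcd)

theorem four_mul_tau {p : ℕ} [Fact p.Prime] (hp : p ≠ 2) {n : ℤ} (hn : (n : ZMod p) ≠ 0) :
    4 * (tau n p : ℤ) = p + 1 + legendreSym p n + legendreSym p (-n) := by
  have hF : ringChar (ZMod p) ≠ 2 := by rwa [ZMod.ringChar_zmod_n]
  rw [tau_eq_ncard, four_mul_ncard_isSquare_and_isSquare_add hF hn, ZMod.card, legendreSym,
    legendreSym, Int.cast_neg]

theorem stmt_6 (p : ℕ) [Fact p.Prime] (hodd : p ≠ 2) (n : ℤ)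
    (hn : Int.gcd n p = 1) :
    (p % 4 = 1 →
      (tau n p : ℤ) = ((p : ℤ) - 1) / 4 + (1 + legendreSym p n) / 2) ∧
    (p % 4 = 3 →
      (tau n p : ℤ) = ((p : ℤ) - 3) / 4 + 1) := by
  have hn' := intCast_ne_zero_of_gcd_eq_one hn
  have h4 := four_mul_tau hodd hn'
  rw [neg_eq_neg_one_mul, legendreSym.mul, legendreSym.at_neg_one hodd] at h4
  have hsign := legendreSym.eq_one_or_neg_one p hn'
  constructor
  · intro hp
    rw [ZMod.χ₄_nat_one_mod_four hp] at h4
    rcases hsign with h | h <;> rw [h] at h4 ⊢ <;> omega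
  · intro hp
    rw [ZMod.χ₄_nat_three_mod_four hp] at h4
    omega
end

section
/- Let p be an odd prime, n an integer with gcd(n,p)=1, and k ≥ 1. If (a,0) is a target for n modulus p^k, then the number of targets (a',b') for n modulus p^{k+1} with a' ≡ a (mod p^k) and b' ≡ 0 (mod p^k) equals (p+1)/2 if k is even, and equals 1 if k is odd. -/
/-!
A lift `(a', b')` of the target `(a, 0)` has `b' = p ^ k * t` for a residue `t` modulo `p`, and then
`a' = b' - n` is forced. Since `p ∤ n`, the element `a'` is a unit reducing to `-n ≡ a (mod p)`, a
square, so by Hensel's lemma `a'` is always a square. The count is therefore the number of `t` for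
which `p ^ k * t` is a square modulo `p ^ (k + 1)`: this holds for `t = 0`, and for `t ≠ 0` exactly
when `k` is even and `t` is a square modulo `p`. Finally, `0` together with the nonzero squares
gives `(p + 1) / 2` squares modulo `p`.
-/

theorem ZMod.isSquare_intCast_iff (m : ℕ) (u : ℤ) :
    IsSquare (u : ZMod m) ↔ ∃ x : ℤ, (m : ℤ) ∣ x * x - u := by
  constructor
  · rintro ⟨r, hr⟩
    obtain ⟨x, rfl⟩ := ZMod.intCast_surjective r
    exact ⟨x, (ZMod.intCast_eq_intCast_iff_dvd_sub _ _ _).1 (by push_cast; exact hr)⟩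
  · rintro ⟨x, hx⟩
    exact ⟨x, by rw [← Int.cast_mul]; exact (ZMod.intCast_eq_intCast_iff_dvd_sub _ _ _).2 hx⟩

theorem Int.exists_mul_self_sub_dvd_pow_succ {p : ℤ} (hp : Prime p) (h2 : ¬ p ∣ 2) {u x : ℤ}
    (hu : ¬ p ∣ u) (hx : p ∣ x * x - u) (m : ℕ) :
    ∃ y : ℤ, p ^ (m + 1) ∣ y * y - u := by
  induction m with
  | zero => exact ⟨x, by simpa using hx⟩
  | succ m ih =>
    obtain ⟨y, d, hd⟩ := ih
    have hy : ¬ p ∣ y := fun hpy ↦ hu <| by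
      have hyy : p ∣ y * y - u := (dvd_pow_self p m.succ_ne_zero).trans ⟨d, hd⟩
      simpa using dvd_sub (hpy.mul_right y) hyy
    -- Newton step `y ↦ y - d p ^ (m + 1) / (2 y)`, with `a` an inverse of `2 y` modulo `p`.
    obtain ⟨a, b, hab⟩ := (hp.coprime_iff_not_dvd.2 fun h ↦ (hp.dvd_mul.1 h).elim h2 hy).symm
    exact ⟨y - a * d * p ^ (m + 1), d * b + a ^ 2 * d ^ 2 * p ^ m, by
      linear_combination hd - p ^ (m + 1) * d * hab⟩

theorem Int.dvd_of_pow_succ_dvd_mul_self_sub {p : ℤ} (hp : Prime p) {x s : ℤ} {j : ℕ} (hj : j ≠ 0)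
    (h : p ^ (j + 1) ∣ x * x - s * p ^ j) : p ∣ x := by
  have hxx : p ∣ x * x := by
    simpa using dvd_add ((dvd_pow_self p j.succ_ne_zero).trans h) ((dvd_pow_self p hj).mul_left s)
  exact (hp.dvd_mul.1 hxx).elim id id

theorem Int.exists_mul_self_sub_mul_pow_dvd_iff {p : ℤ} (hp : Prime p) {s : ℤ} (hs : ¬ p ∣ s)
    (k : ℕ) :
    (∃ x : ℤ, p ^ (k + 1) ∣ x * x - s * p ^ k) ↔ Even k ∧ ∃ y : ℤ, p ∣ y * y - s := by
  have hp0 : p ≠ 0 := hp.ne_zero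
  -- For `k ≥ 1` the hypothesis forces `p ∣ x`, and writing `x = p y` lowers `k` by two.
  induction k using Nat.twoStepInduction with
  | zero => simp
  | one =>
    simp only [Nat.not_even_one, false_and, iff_false, not_exists]
    intro x hx
    obtain ⟨y, rfl⟩ := Int.dvd_of_pow_succ_dvd_mul_self_sub hp one_ne_zero hx
    have hy : p ∣ p * y * y - s := (mul_dvd_mul_iff_left hp0).1 <| by
      rwa [show p * (p * y * y - s) = p * y * (p * y) - s * p ^ 1 by ring, ← pow_two]
    exact hs (by simpa using dvd_sub ((dvd_mul_right p y).mul_right y) hy)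
  | more k ih _ =>
    rw [show Even (k + 2) ↔ Even k by simp [Nat.even_add]]
    refine Iff.trans ?_ ih
    constructor
    · rintro ⟨x, hx⟩
      obtain ⟨y, rfl⟩ := Int.dvd_of_pow_succ_dvd_mul_self_sub hp (by omega) hx
      refine ⟨y, (mul_dvd_mul_iff_left (pow_ne_zero 2 hp0)).1 ?_⟩
      rwa [← pow_add, show 2 + (k + 1) = k + 2 + 1 by omega,
        show p ^ 2 * (y * y - s * p ^ k) = p * y * (p * y) - s * p ^ (k + 2) by ring]
    · rintro ⟨y, hy⟩
      refine ⟨p * y, ?_⟩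
      rw [show p * y * (p * y) - s * p ^ (k + 2) = p ^ 2 * (y * y - s * p ^ k) by ring,
        show k + 2 + 1 = 2 + (k + 1) by omega, pow_add]
      exact mul_dvd_mul_left _ hy

open Finset in
theorem FiniteField.ncard_setOf_isSquare {F : Type*} [Field F] [Fintype F] (hF : ringChar F ≠ 2) :
    {a : F | IsSquare a}.ncard = (Fintype.card F + 1) / 2 := by
  classical
  set S : Finset F := {a | IsSquare a}
  -- Away from `0`, squaring is two-to-one onto the nonzero squares.
  have hfiber : ∀ a ∈ S, #{x | x ^ 2 = a} + (if a = 0 then 1 else 0) = 2 := by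
    intro a ha
    have hsqrts := quadraticChar_card_sqrts hF a
    rw [Set.toFinset_ofPred] at hsqrts
    by_cases h0 : a = 0
    · simp_all
    · have : quadraticChar F a = 1 := (quadraticChar_one_iff_isSquare h0).2 (by simpa [S] using ha)
      rw [if_neg h0]
      omega
  have hcard : Fintype.card F = ∑ a ∈ S, #{x | x ^ 2 = a} :=
    card_eq_sum_card_fiberwise fun x _ ↦ by simp [S, sq, IsSquare.mul_self]
  have hsum := sum_congr rfl hfiber
  rw [sum_add_distrib, ← hcard, sum_ite_eq', if_pos (by simp [S]), sum_const, smul_eq_mul] at hsum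
  rw [show {a : F | IsSquare a} = ↑S by simp [S], Set.ncard_coe_finset]
  omega

theorem ZMod.isSquare_intCast_pow_succ_of_isSquare {p : ℕ} (hp : p.Prime) (hodd : p ≠ 2) {u : ℤ}
    (hu : ¬ (p : ℤ) ∣ u) (h : IsSquare (u : ZMod p)) (m : ℕ) :
    IsSquare (u : ZMod (p ^ (m + 1))) := by
  have h2 : ¬ (p : ℤ) ∣ 2 := fun h ↦
    hodd <| (Nat.prime_dvd_prime_iff_eq hp Nat.prime_two).1 (by exact_mod_cast h)
  obtain ⟨x, hx⟩ := (ZMod.isSquare_intCast_iff p u).1 h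
  rw [ZMod.isSquare_intCast_iff]
  push_cast
  exact Int.exists_mul_self_sub_dvd_pow_succ (Nat.prime_iff_prime_int.mp hp) h2 hu hx m

theorem ZMod.isSquare_intCast_mul_pow_iff {p : ℕ} (hp : p.Prime) {s : ℤ} (hs : ¬ (p : ℤ) ∣ s)
    (k : ℕ) : IsSquare ((s * p ^ k : ℤ) : ZMod (p ^ (k + 1))) ↔ Even k ∧ IsSquare (s : ZMod p) := by
  rw [ZMod.isSquare_intCast_iff, ZMod.isSquare_intCast_iff]
  push_cast
  exact Int.exists_mul_self_sub_mul_pow_dvd_iff (Nat.prime_iff_prime_int.mp hp) hs k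

def powMul (p k : ℕ) (t : ZMod p) : ZMod (p ^ (k + 1)) :=
  ((t.val * p ^ k : ℕ) : ZMod (p ^ (k + 1)))

section powMul

variable {p : ℕ} [Fact p.Prime] (k : ℕ)

theorem val_powMul (t : ZMod p) : (powMul p k t).val = t.val * p ^ k := by
  refine ZMod.val_cast_of_lt ?_
  rw [pow_succ']
  exact Nat.mul_lt_mul_of_pos_right t.val_lt (pow_pos (Fact.out : p.Prime).pos k)

theorem powMul_injective : Function.Injective (powMul p k) := fun t t' h ↦ by
  have := congrArg ZMod.val h
  rw [val_powMul, val_powMul] at this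
  exact ZMod.val_injective _ (Nat.eq_of_mul_eq_mul_right (pow_pos (Fact.out : p.Prime).pos k) this)

theorem powMul_zero : powMul p k 0 = 0 := by
  simp [powMul]

theorem powMul_eq_intCast (t : ZMod p) : powMul p k t = (((t.val : ℤ) * p ^ k : ℤ) : ZMod _) := by
  simp [powMul]

theorem castHom_eq_zero_iff_mem_range_powMul (b : ZMod (p ^ (k + 1))) :
    ZMod.castHom (pow_dvd_pow p k.le_succ) (ZMod (p ^ k)) b = 0 ↔ b ∈ Set.range (powMul p k) := by
  rw [ZMod.castHom_apply, ← ZMod.natCast_val, ZMod.natCast_eq_zero_iff]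
  constructor
  · rintro ⟨c, hc⟩
    have hcp : c < p := by
      refine Nat.lt_of_mul_lt_mul_left (a := p ^ k) ?_
      rw [← hc, ← pow_succ]
      exact b.val_lt
    refine ⟨c, ZMod.val_injective _ ?_⟩
    rw [val_powMul, ZMod.val_cast_of_lt hcp, hc, mul_comm]
  · rintro ⟨t, rfl⟩
    exact ⟨t.val, by rw [val_powMul, mul_comm]⟩

theorem isSquare_powMul_iff (t : ZMod p) :
    IsSquare (powMul p k t) ↔ t = 0 ∨ Even k ∧ IsSquare t := by
  rcases eq_or_ne t 0 with rfl | ht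
  · simp [powMul_zero]
  have hpt : ¬ (p : ℤ) ∣ t.val := by
    rw [Int.natCast_dvd_natCast]
    exact Nat.not_dvd_of_pos_of_lt ((ZMod.val_pos).2 ht) t.val_lt
  rw [powMul_eq_intCast, ZMod.isSquare_intCast_mul_pow_iff Fact.out hpt]
  simp [ht]

theorem setOf_isSquare_powMul :
    {t : ZMod p | IsSquare (powMul p k t)} = if Even k then {t | IsSquare t} else {0} := by
  split_ifs with hk <;> ext t <;>
    simp only [Set.mem_ofPred_eq, Set.mem_singleton_iff, isSquare_powMul_iff, hk, true_and,
      false_and, or_false]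
  exact or_iff_right_of_imp fun h ↦ by simp [h]

theorem isSquare_powMul_sub_intCast (hodd : p ≠ 2) (hk : k ≠ 0) {n : ℤ} (hn : ¬ (p : ℤ) ∣ n)
    (h : IsSquare (-(n : ZMod p))) (t : ZMod p) : IsSquare (powMul p k t - n) := by
  have hdvd : (p : ℤ) ∣ t.val * p ^ k := (dvd_pow_self _ hk).mul_left _
  rw [powMul_eq_intCast, ← Int.cast_sub]
  refine ZMod.isSquare_intCast_pow_succ_of_isSquare Fact.out hodd
    (fun h ↦ hn (by simpa using dvd_sub hdvd h)) ?_ k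
  rw [Int.cast_sub, (ZMod.intCast_zmod_eq_zero_iff_dvd _ p).2 hdvd, zero_sub]
  exact h

end powMul

theorem setOf_isTarget_lift_eq_image {p : ℕ} [Fact p.Prime] (hodd : p ≠ 2) {n : ℤ}
    (hn : ¬ (p : ℤ) ∣ n) {k : ℕ} (hk : k ≠ 0) {a : ZMod (p ^ k)} (ha : IsTarget n (p ^ k) a 0) :
    {q : ZMod (p ^ (k + 1)) × ZMod (p ^ (k + 1)) |
        IsTarget n (p ^ (k + 1)) q.1 q.2 ∧
        ZMod.castHom (pow_dvd_pow p k.le_succ) (ZMod (p ^ k)) q.1 = a ∧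
        ZMod.castHom (pow_dvd_pow p k.le_succ) (ZMod (p ^ k)) q.2 = 0} =
      (fun t ↦ (powMul p k t - n, powMul p k t)) '' {t | IsSquare (powMul p k t)} := by
  have ha' : a = -n := eq_neg_of_add_eq_zero_right ha.2.2
  have hsq : IsSquare (-(n : ZMod p)) := by
    have h := ha.1.map (ZMod.castHom (dvd_pow_self p hk) (ZMod p))
    rwa [ha', map_neg, map_intCast] at h
  ext ⟨a', b'⟩
  simp only [IsTarget, Set.mem_ofPred_eq, Set.mem_image, Prod.mk.injEq]
  constructor
  · rintro ⟨⟨-, hb', hab'⟩, -, hcast⟩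
    obtain ⟨t, rfl⟩ := (castHom_eq_zero_iff_mem_range_powMul k b').1 hcast
    exact ⟨t, hb', by rw [← hab']; ring, rfl⟩
  · rintro ⟨t, ht, rfl, rfl⟩
    refine ⟨⟨isSquare_powMul_sub_intCast k hodd hk hn hsq t, ht, by ring⟩, ?_,
      (castHom_eq_zero_iff_mem_range_powMul k _).2 ⟨t, rfl⟩⟩
    rw [map_sub, (castHom_eq_zero_iff_mem_range_powMul k _).2 ⟨t, rfl⟩, map_intCast, ha', zero_sub]

theorem stmt_11 (p : ℕ) [Fact p.Prime] (hodd : p ≠ 2) (n : ℤ)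
    (hn : Int.gcd n p = 1) (k : ℕ) (hk : 1 ≤ k)
    (a : ZMod (p ^ k)) (ha : IsTarget n (p ^ k) a 0) :
    (Even k →
      ({q : ZMod (p ^ (k + 1)) × ZMod (p ^ (k + 1)) |
          IsTarget n (p ^ (k + 1)) q.1 q.2 ∧
          ZMod.castHom (pow_dvd_pow p k.le_succ) (ZMod (p ^ k)) q.1 = a ∧
          ZMod.castHom (pow_dvd_pow p k.le_succ) (ZMod (p ^ k)) q.2 = 0}).ncard
        = (p + 1) / 2) ∧
    (Odd k →
      ({q : ZMod (p ^ (k + 1)) × ZMod (p ^ (k + 1)) |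
          IsTarget n (p ^ (k + 1)) q.1 q.2 ∧
          ZMod.castHom (pow_dvd_pow p k.le_succ) (ZMod (p ^ k)) q.1 = a ∧
          ZMod.castHom (pow_dvd_pow p k.le_succ) (ZMod (p ^ k)) q.2 = 0}).ncard
        = 1) := by
  have hpn : ¬ (p : ℤ) ∣ n := (Nat.prime_iff_prime_int.mp Fact.out).coprime_iff_not_dvd.1
    (Int.isCoprime_iff_gcd_eq_one.2 hn).symm
  rw [setOf_isTarget_lift_eq_image hodd hpn (by omega) ha,
    Set.ncard_image_of_injective _ fun t t' h ↦ powMul_injective k (congrArg Prod.snd h),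
    setOf_isSquare_powMul]
  refine ⟨fun hk ↦ ?_, fun hk ↦ ?_⟩
  · rw [if_pos hk, FiniteField.ncard_setOf_isSquare (by rwa [ZMod.ringChar_zmod_n]), ZMod.card]
  · rw [if_neg (Nat.not_even_iff_odd.2 hk), Set.ncard_singleton]
end
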